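/- Existence Lemma, implication clause: let X ⊆ {D,T,4}, L = LIK X, and let Γ be a prime theory. If B⊃C ∉ Γ, then there exists a prime theory Δ such that Γ ⊆ Δ, B ∈ Δ and C ∉ Δ. -/
import Mathlib


/-- Formulas of intuitionistic modal logic. -/
inductive Formula : Type where
  | atom : ℕ → Formula
  | top  : Formula
  | bot  : Formula
  | and  : Formula → Formula → Formula
  | or   : Formula → Formula → Formula
  | imp  : Formula → Formula → Formula
  | box  : Formula → Formula
  | dia  : Formula → Formula
deriving DecidableEq


/-- The three optional extension axioms D, T, 4. -/
inductive ModAx : Type where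
  | D : ModAx
  | T : ModAx
  | Four : ModAx
deriving DecidableEq

/-- The Hilbert system LIK X: a complete Hilbert base for intuitionistic
propositional logic (as axiom schemata, hence all substitution instances of
IPL theorems are derivable), the modal axioms K□, K◇, N, DP, RV, the
extension axioms D, T, 4 according to membership in `X`, with rules
modus ponens and necessitation. -/
inductive LIK (X : Set ModAx) : Formula → Prop where
  | a1 (A B : Formula) : LIK X (A.imp (B.imp A))
  | a2 (A B C : Formula) : LIK X ((A.imp (B.imp C)).imp ((A.imp B).imp (A.imp C)))
  | a3 (A B : Formula) : LIK X ((A.and B).imp A)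
  | a4 (A B : Formula) : LIK X ((A.and B).imp B)
  | a5 (A B : Formula) : LIK X (A.imp (B.imp (A.and B)))
  | a6 (A B : Formula) : LIK X (A.imp (A.or B))
  | a7 (A B : Formula) : LIK X (B.imp (A.or B))
  | a8 (A B C : Formula) : LIK X ((A.imp C).imp ((B.imp C).imp ((A.or B).imp C)))
  | exfalso (A : Formula) : LIK X (Formula.bot.imp A)
  | truth : LIK X Formula.top
  | kbox (A B : Formula) :
      LIK X ((Formula.box (A.imp B)).imp ((Formula.box A).imp (Formula.box B)))
  | kdia (A B : Formula) :
      LIK X ((Formula.box (A.imp B)).imp ((Formula.dia A).imp (Formula.dia B)))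
  | nax : LIK X ((Formula.dia Formula.bot).imp Formula.bot)
  | dp (A B : Formula) :
      LIK X ((Formula.dia (A.or B)).imp ((Formula.dia A).or (Formula.dia B)))
  | rv (A B : Formula) :
      LIK X ((Formula.box (A.or B)).imp ((Formula.dia A).or (Formula.box B)))
  | dax : ModAx.D ∈ X → LIK X (Formula.dia Formula.top)
  | tax (A : Formula) : ModAx.T ∈ X →
      LIK X (((Formula.box A).imp A).and (A.imp (Formula.dia A)))
  | fourax (A : Formula) : ModAx.Four ∈ X →
      LIK X (((Formula.box A).imp (Formula.box (Formula.box A))).and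
        ((Formula.dia (Formula.dia A)).imp (Formula.dia A)))
  | mp (A B : Formula) : LIK X (A.imp B) → LIK X A → LIK X B
  | nec (A : Formula) : LIK X A → LIK X (Formula.box A)

/-- A theory for L = LIK X: contains all L-derivable formulas and is closed
under modus ponens. -/
def IsTheory (X : Set ModAx) (Γ : Set Formula) : Prop :=
  (∀ A, LIK X A → A ∈ Γ) ∧ ∀ A B, Formula.imp A B ∈ Γ → A ∈ Γ → B ∈ Γ

/-- A prime theory: a proper theory (⊥ ∉ Γ) deciding disjunctions. -/
def IsPrime (X : Set ModAx) (Γ : Set Formula) : Prop :=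
  IsTheory X Γ ∧ Formula.bot ∉ Γ ∧ ∀ A B, Formula.or A B ∈ Γ → A ∈ Γ ∨ B ∈ Γ

/-- The canonical accessibility relation:
`R_L Γ Δ` iff `□Γ ⊆ Δ` and `◇Δ ⊆ Γ`. -/
def CanR (Γ Δ : Set Formula) : Prop :=
  (∀ A, Formula.box A ∈ Γ → A ∈ Δ) ∧ (∀ A, A ∈ Δ → Formula.dia A ∈ Γ)

section Aux

variable {X : Set ModAx}

/-- Derivability from a set of hypotheses. -/
inductive Deriv (X : Set ModAx) (S : Set Formula) : Formula → Prop where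
  | ax {A} : LIK X A → Deriv X S A
  | hyp {A} : A ∈ S → Deriv X S A
  | mp {A B} : Deriv X S (A.imp B) → Deriv X S A → Deriv X S B

lemma Deriv.mono {S T : Set Formula} {A} (h : Deriv X S A) (hST : S ⊆ T) :
    Deriv X T A := by
  induction h with
  | ax h => exact Deriv.ax h
  | hyp h => exact Deriv.hyp (hST h)
  | mp _ _ ih1 ih2 => exact Deriv.mp ih1 ih2

lemma lik_id (X : Set ModAx) (A : Formula) : LIK X (A.imp A) :=
  LIK.mp _ _ (LIK.mp _ _ (LIK.a2 A (A.imp A) A) (LIK.a1 A (A.imp A))) (LIK.a1 A A)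

lemma deduction {S : Set Formula} {A B : Formula}
    (h : Deriv X (insert A S) B) : Deriv X S (A.imp B) := by
  induction h with
  | @ax D h => exact Deriv.mp (Deriv.ax (LIK.a1 D A)) (Deriv.ax h)
  | @hyp D h =>
    rcases Set.mem_insert_iff.mp h with rfl | h
    · exact Deriv.ax (lik_id X _)
    · exact Deriv.mp (Deriv.ax (LIK.a1 D A)) (Deriv.hyp h)
  | @mp D E _ _ ih1 ih2 =>
    exact Deriv.mp (Deriv.mp (Deriv.ax (LIK.a2 A D E)) ih1) ih2

lemma deriv_finite {S : Set Formula} {A : Formula} (h : Deriv X S A) :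
    ∃ F : Set Formula, F ⊆ S ∧ F.Finite ∧ Deriv X F A := by
  induction h with
  | ax h => exact ⟨∅, Set.empty_subset _, Set.finite_empty, Deriv.ax h⟩
  | @hyp D h => exact ⟨{D}, Set.singleton_subset_iff.mpr h, Set.finite_singleton _,
      Deriv.hyp rfl⟩
  | mp _ _ ih1 ih2 =>
    obtain ⟨F1, hF1, hf1, hd1⟩ := ih1
    obtain ⟨F2, hF2, hf2, hd2⟩ := ih2
    exact ⟨F1 ∪ F2, Set.union_subset hF1 hF2, hf1.union hf2,
      Deriv.mp (hd1.mono Set.subset_union_left) (hd2.mono Set.subset_union_right)⟩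

lemma theory_deriv {Γ : Set Formula} (hΓ : IsTheory X Γ) {A : Formula}
    (h : Deriv X Γ A) : A ∈ Γ := by
  induction h with
  | ax h => exact hΓ.1 _ h
  | hyp h => exact h
  | mp _ _ ih1 ih2 => exact hΓ.2 _ _ ih1 ih2

end Aux


lemma finite_subset_chain {c : Set (Set Formula)} (hc : IsChain (· ⊆ ·) c)
    (hne : c.Nonempty) (F : Finset Formula) (hsub : ↑F ⊆ ⋃₀ c) :
    ∃ T ∈ c, ↑F ⊆ T := by
  induction F using Finset.induction_on with
  | empty => exact ⟨hne.choose, hne.choose_spec, by simp⟩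
  | @insert a F ha ih =>
    rw [Finset.coe_insert] at hsub
    obtain ⟨T, hT, hFT⟩ := ih (Set.Subset.trans (Set.subset_insert a ↑F) hsub)
    obtain ⟨U, hU, haU⟩ := hsub (Set.mem_insert a ↑F)
    rw [Finset.coe_insert]
    rcases hc.total hT hU with hTU | hUT
    · exact ⟨U, hU, Set.insert_subset haU (hFT.trans hTU)⟩
    · exact ⟨T, hT, Set.insert_subset (hUT haU) hFT⟩

/-- Existence Lemma, implication clause: if Γ is a prime theory and
B ⊃ C ∉ Γ, then some prime theory Δ extends Γ with B ∈ Δ and C ∉ Δ. -/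
theorem existence_imp (X : Set ModAx) (Γ : Set Formula) (hΓ : IsPrime X Γ)
    (B C : Formula) (h : Formula.imp B C ∉ Γ) :
    ∃ Δ : Set Formula, IsPrime X Δ ∧ Γ ⊆ Δ ∧ B ∈ Δ ∧ C ∉ Δ := by
  obtain ⟨hΓth, hΓbot, hΓprime⟩ := hΓ
  set S : Set (Set Formula) := {T | ¬ Deriv X T C} with hS
  have hstart : insert B Γ ∈ S := by
    intro hd
    exact h (theory_deriv hΓth (deduction hd))
  have hchain : ∀ c ⊆ S, IsChain (· ⊆ ·) c → c.Nonempty →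
      ∃ ub ∈ S, ∀ s ∈ c, s ⊆ ub := by
    intro c hcS hc hne
    refine ⟨⋃₀ c, ?_, fun s hs => Set.subset_sUnion_of_mem hs⟩
    intro hd
    obtain ⟨F, hFsub, hFfin, hFd⟩ := deriv_finite hd
    obtain ⟨T, hTc, hFT⟩ := finite_subset_chain hc hne hFfin.toFinset
      (by rwa [Set.Finite.coe_toFinset])
    rw [Set.Finite.coe_toFinset] at hFT
    exact hcS hTc (hFd.mono hFT)
  obtain ⟨Δ, hsub, hΔS, hmax⟩ := zorn_subset_nonempty S hchain _ hstart
  have hCnot : ¬ Deriv X Δ C := hΔS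
  -- Δ is deductively closed
  have hclosed : ∀ A, Deriv X Δ A → A ∈ Δ := by
    intro A hA
    by_contra hAn
    have : insert A Δ ∈ S := by
      intro hd
      exact hCnot (Deriv.mp (deduction hd) hA)
    have := hmax this (Set.subset_insert A Δ)
    exact hAn (this (Set.mem_insert A Δ))
  have hth : IsTheory X Δ :=
    ⟨fun A hA => hclosed A (Deriv.ax hA),
     fun A D hAB hA => hclosed D (Deriv.mp (Deriv.hyp hAB) (Deriv.hyp hA))⟩
  have hCmem : C ∉ Δ := fun hC => hCnot (Deriv.hyp hC)
  refine ⟨Δ, ⟨hth, ?_, ?_⟩, fun x hx => hsub (Set.mem_insert_of_mem B hx),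
    hsub (Set.mem_insert B Γ), hCmem⟩
  · intro hbot
    exact hCmem (hth.2 _ _ (hth.1 _ (LIK.exfalso C)) hbot)
  · intro A D hor
    by_contra hn
    push_neg at hn
    obtain ⟨hA, hD⟩ := hn
    have dA : Deriv X Δ (A.imp C) := by
      apply deduction
      by_contra hd
      have : insert A Δ ∈ S := hd
      have := hmax this (Set.subset_insert A Δ)
      exact hA (this (Set.mem_insert A Δ))
    have dD : Deriv X Δ (D.imp C) := by
      apply deduction
      by_contra hd
      have : insert D Δ ∈ S := hd
      have := hmax this (Set.subset_insert D Δ)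
      exact hD (this (Set.mem_insert D Δ))
    exact hCnot (Deriv.mp (Deriv.mp (Deriv.mp (Deriv.ax (LIK.a8 A D C)) dA) dD)
      (Deriv.hyp hor))
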